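/- Let φ ∈ C²([0,A]) with φ(0) = φ(A) = 0, φ'(0) = 1, φ'(A) = -1, φ > 0 on (0,A), and suppose -φ''/φ = c + ψ + aφ' on (0,A) where c, a are constants and ψ : [0,A] → ℝ satisfies φ'·ψ = 0 pointwise. Then a·∫₀^A φ·(φ')² dr = 0, and hence a = 0 whenever ∫₀^A φ(φ')² dr > 0. -/

import Mathlib

/-! Multiplying `-φ'' = (c + ψ + aφ')φ` by `φ'` and using `φ'ψ = 0` gives
`aφ(φ')² = -φ'φ'' - cφφ'`, the derivative of `-((φ')² + cφ²)/2`. Its integral over `[0,A]`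
vanishes because `φ` vanishes at both ends and `(φ')² = 1` there. -/

open Set intervalIntegral
open scoped Interval

theorem integral_mul_deriv_eq_half_sq_sub {f f' : ℝ → ℝ} {a b : ℝ}
    (hf : ∀ x ∈ [[a, b]], HasDerivWithinAt f (f' x) [[a, b]] x)
    (hf' : IntervalIntegrable f' MeasureTheory.volume a b) :
    ∫ x in a..b, f x * f' x = (f b ^ 2 - f a ^ 2) / 2 := by
  have h := integral_deriv_mul_eq_sub_of_hasDerivWithinAt hf hf hf' hf'
  simp_rw [mul_comm (f' _) (f _), ← two_mul, integral_const_mul] at h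
  linarith

theorem mul_mul_sq_eq_of_neg_div_eq {y y' y'' s c a : ℝ} (hy : y ≠ 0)
    (h : -y'' / y = c + s + a * y') (hs : y' * s = 0) :
    a * (y * y' ^ 2) = -(y' * y'') - c * (y * y') := by
  rw [div_eq_iff hy] at h
  linear_combination (-y') * h - y * hs

/-- The integration-by-parts computation in the soliton classification:
if `-φ''/φ = c + ψ + aφ'` on `(0,A)` with `φ'ψ = 0` and the stated boundary
conditions, then `a·∫₀^A φ(φ')² = 0`, hence `a = 0` when the integral is positive. -/
theorem stmt_12 (A : ℝ) (hA : 0 < A) (φ φ' φ'' ψ : ℝ → ℝ) (c a : ℝ)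
    (hd1 : ∀ r ∈ Set.Icc (0:ℝ) A, HasDerivWithinAt φ (φ' r) (Set.Icc 0 A) r)
    (hd2 : ∀ r ∈ Set.Icc (0:ℝ) A, HasDerivWithinAt φ' (φ'' r) (Set.Icc 0 A) r)
    (hcont : ContinuousOn φ'' (Set.Icc 0 A))
    (h0 : φ 0 = 0) (hAend : φ A = 0) (h0' : φ' 0 = 1) (hA' : φ' A = -1)
    (hpos : ∀ r ∈ Set.Ioo (0:ℝ) A, 0 < φ r)
    (heq : ∀ r ∈ Set.Ioo (0:ℝ) A, -(φ'' r) / φ r = c + ψ r + a * φ' r)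
    (hψ : ∀ r ∈ Set.Icc (0:ℝ) A, φ' r * ψ r = 0) :
    a * (∫ r in (0:ℝ)..A, φ r * (φ' r)^2) = 0 ∧
    (0 < ∫ r in (0:ℝ)..A, φ r * (φ' r)^2 → a = 0) := by
  rw [← uIcc_of_le hA.le] at hd1 hd2 hcont
  have hφ'_cont : ContinuousOn φ' [[0, A]] := fun r hr ↦ (hd2 r hr).continuousWithinAt
  have hφ_cont : ContinuousOn φ [[0, A]] := fun r hr ↦ (hd1 r hr).continuousWithinAt
  have hφ'φ'' := integral_mul_deriv_eq_half_sq_sub hd2 hcont.intervalIntegrable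
  have hφφ' := integral_mul_deriv_eq_half_sq_sub hd1 hφ'_cont.intervalIntegrable
  have hpointwise : EqOn (fun r ↦ a * (φ r * φ' r ^ 2))
      (fun r ↦ -(φ' r * φ'' r) - c * (φ r * φ' r)) (Ioo 0 A) := fun r hr ↦
    mul_mul_sq_eq_of_neg_div_eq (hpos r hr).ne' (heq r hr) (hψ r (Ioo_subset_Icc_self hr))
  have hmain : a * ∫ r in (0:ℝ)..A, φ r * φ' r ^ 2 = 0 := by
    rw [← integral_const_mul, integral_congr_Ioo_of_le hA.le hpointwise, integral_sub,
      integral_neg, integral_const_mul, hφ'φ'', hφφ', h0, hAend, h0', hA']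
    · norm_num
    · exact (hφ'_cont.mul hcont).intervalIntegrable.neg
    · exact (continuousOn_const.mul (hφ_cont.mul hφ'_cont)).intervalIntegrable
  exact ⟨hmain, fun hI ↦ (mul_eq_zero.1 hmain).resolve_right hI.ne'⟩
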